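/- Let A be a 2×2 matrix with entries in {0,1}, let X_A = {x : ℤ → Fin 2 | for all k, A (x k) (x (k+1)) = 1} be the associated subshift of finite type with shift map σ_A given by (σ_A x)(k) = x(k+1), and for n ≥ 1 let Per_n(σ_A) = {x ∈ X_A | σ_A^n x = x}. Then for every real number t with |t| < 1/2, each set Per_n(σ_A) is finite, the series ∑_{n≥1} |Per_n(σ_A)| tⁿ/n converges, and exp(∑_{n≥1} |Per_n(σ_A)| tⁿ/n) = (det(A)·t² − tr(A)·t + 1)⁻¹, where det(A) and tr(A) are the determinant and trace of A viewed as an integer matrix. -/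

import Mathlib

/-- The shift map on bi-infinite sequences over the alphabet `Fin m`. -/
def shiftMap (m : ℕ) : (ℤ → Fin m) → (ℤ → Fin m) := fun x k => x (k + 1)

/-- The set of `n`-periodic points of the subshift of finite type `X_A` determined by the
`m × m` matrix `A`: bi-infinite sequences `x` lying in `X_A` that are fixed by the `n`-th
iterate of the shift map. -/
def perSet (m : ℕ) (A : Matrix (Fin m) (Fin m) ℤ) (n : ℕ) : Set (ℤ → Fin m) :=
  {x | (∀ k : ℤ, A (x k) (x (k + 1)) = 1) ∧ (shiftMap m)^[n] x = x}

/-!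
An `n`-periodic point of the shift is the same thing as a function `ZMod n → Fin m`, and it lies
in `X_A` exactly when it is a closed walk of length `n` in the graph of `A`; for a `0`-`1` matrix
the number of such walks is `tr (A ^ n)`. For a `2 × 2` matrix with eigenvalues `a, b` this trace
is `a ^ n + b ^ n`, so the zeta series splits into the two logarithm series
`-log (1 - a t) - log (1 - b t)`, and `(1 - a t) (1 - b t) = det A t² - tr A t + 1`. A `0`-`1`
matrix of size two has real eigenvalues of absolute value at most `2`, which is where the radius
`1 / 2` comes from.
-/

namespace Matrix

def closedWalks {ι R : Type*} [One R] (A : Matrix ι ι R) (n : ℕ) : Set (ZMod n → ι) :=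
  {f | ∀ j, A (f j) (f (j + 1)) = 1}

variable {ι R : Type*} [Fintype ι] [DecidableEq ι] [CommSemiring R]

theorem trace_pow_mul_eq_sum (A B : Matrix ι ι R) (k : ℕ) :
    (A ^ k * B).trace = ∑ p : Fin (k + 1) → ι,
      (∏ j : Fin k, A (p j.castSucc) (p j.succ)) * B (p (Fin.last k)) (p 0) := by
  induction k generalizing B with
  | zero =>
    rw [pow_zero, one_mul, trace, ← (Equiv.funUnique (Fin 1) ι).symm.sum_comp (M := R)]
    simp
  | succ k ih =>
    rw [pow_succ, mul_assoc, ih]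
    conv_rhs =>
      rw [← (Fin.snocEquiv fun _ => ι).sum_comp, Fintype.sum_prod_type, Finset.sum_comm]
    refine Finset.sum_congr rfl fun p _ => ?_
    simp only [mul_apply, Finset.mul_sum, Fin.snocEquiv_apply, Fin.prod_univ_castSucc,
      Fin.snoc_castSucc, Fin.snoc_last, Fin.succ_last, Fin.succ_castSucc, Fin.snoc_apply_zero,
      mul_assoc]

theorem trace_pow_eq_sum_prod (A : Matrix ι ι R) (n : ℕ) [NeZero n] :
    (A ^ n).trace = ∑ f : ZMod n → ι, ∏ j, A (f j) (f (j + 1)) := by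
  obtain ⟨k, rfl⟩ := Nat.exists_eq_succ_of_ne_zero (NeZero.ne n)
  -- `ZMod (k + 1)` is `Fin (k + 1)` by definition, with its wrap-around addition.
  change _ = ∑ f : Fin (k + 1) → ι, ∏ j : Fin (k + 1), A (f j) (f (j + 1))
  simp only [pow_succ, trace_pow_mul_eq_sum, Fin.prod_univ_castSucc, Fin.coeSucc_eq_succ,
    Fin.last_add_one]

theorem trace_pow_eq_ncard_closedWalks (A : Matrix ι ι R) (hA : ∀ i j, A i j = 0 ∨ A i j = 1)
    (n : ℕ) [NeZero n] : (A ^ n).trace = (closedWalks A n).ncard := by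
  classical
  have hA' : ∀ i j, A i j = if A i j = 1 then 1 else 0 := fun i j => by
    rcases hA i j with h | h <;> simp [h]
  rw [trace_pow_eq_sum_prod, Set.ncard_eq_toFinset_card', closedWalks,
    Set.toFinset_ofPred, Finset.card_filter, Nat.cast_sum]
  refine Fintype.sum_congr _ _ fun f => ?_
  rw [Nat.cast_ite, Nat.cast_one, Nat.cast_zero, ← Fintype.prod_boole]
  exact Fintype.prod_congr _ _ fun j => hA' _ _

end Matrix

theorem Function.Periodic.map_emod {β : Type*} {x : ℤ → β} {n : ℤ} (h : Function.Periodic x n)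
    (k : ℤ) : x (k % n) = x k := by
  rw [Int.emod_def, mul_comm]
  exact h.sub_int_mul_eq _

theorem Function.periodic_iff_exists_eq_comp_intCast {β : Type*} {x : ℤ → β} {n : ℕ} :
    Function.Periodic x n ↔ ∃ f : ZMod n → β, x = f ∘ Int.cast := by
  constructor
  · intro h
    exact ⟨fun j => x (ZMod.cast j), funext fun k => by simp [ZMod.coe_intCast, h.map_emod]⟩
  · rintro ⟨f, rfl⟩ k
    simp

theorem shiftMap_iterate_apply (m : ℕ) (x : ℤ → Fin m) (q : ℕ) (k : ℤ) :
    (shiftMap m)^[q] x k = x (k + q) := by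
  induction q generalizing x with
  | zero => simp
  | succ q ih =>
    rw [Function.iterate_succ_apply, ih]
    simp only [shiftMap, Nat.cast_succ, add_assoc]

theorem shiftMap_iterate_eq_self_iff (m : ℕ) (x : ℤ → Fin m) (n : ℕ) :
    (shiftMap m)^[n] x = x ↔ Function.Periodic x n := by
  simp only [funext_iff, shiftMap_iterate_apply, Function.Periodic]

theorem perSet_eq_image (m : ℕ) (A : Matrix (Fin m) (Fin m) ℤ) (n : ℕ) :
    perSet m A n = (· ∘ Int.cast) '' Matrix.closedWalks A n := by
  ext x
  simp only [perSet, Set.mem_ofPred_eq, shiftMap_iterate_eq_self_iff,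
    Function.periodic_iff_exists_eq_comp_intCast, Set.mem_image, Matrix.closedWalks]
  constructor
  · rintro ⟨hedge, f, rfl⟩
    refine ⟨f, fun j => ?_, rfl⟩
    obtain ⟨k, rfl⟩ := ZMod.intCast_surjective j
    simpa using hedge k
  · rintro ⟨f, hf, rfl⟩
    exact ⟨fun k => by simpa using hf k, f, rfl⟩

theorem perSet_finite (m : ℕ) (A : Matrix (Fin m) (Fin m) ℤ) (n : ℕ) [NeZero n] :
    (perSet m A n).Finite := by
  rw [perSet_eq_image]
  exact (Set.toFinite _).image _

theorem ncard_perSet (m : ℕ) (A : Matrix (Fin m) (Fin m) ℤ) (n : ℕ) :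
    (perSet m A n).ncard = (Matrix.closedWalks A n).ncard := by
  rw [perSet_eq_image, Set.ncard_image_of_injective _ ZMod.intCast_surjective.injective_comp_right]

/-- The hypotheses say that `X ^ 2 - τ X + d` has real roots, is nonnegative at `± r`, and has
its vertex in `[-r, r]`. -/
theorem Real.exists_roots_abs_le {τ d r : ℝ} (hdisc : 4 * d ≤ τ ^ 2) (hτ : |τ| ≤ 2 * r)
    (hr : 0 ≤ r ^ 2 - τ * r + d) (hr' : 0 ≤ r ^ 2 + τ * r + d) :
    ∃ a b : ℝ, a + b = τ ∧ a * b = d ∧ |a| ≤ r ∧ |b| ≤ r := by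
  set s := √(τ ^ 2 - 4 * d)
  have hs : s ^ 2 = τ ^ 2 - 4 * d := Real.sq_sqrt (by linarith)
  have hs0 : 0 ≤ s := Real.sqrt_nonneg _
  obtain ⟨hτl, hτu⟩ := abs_le.1 hτ
  have hsl : s ≤ 2 * r - τ := Real.sqrt_le_iff.2 ⟨by linarith, by nlinarith⟩
  have hsu : s ≤ 2 * r + τ := Real.sqrt_le_iff.2 ⟨by linarith, by nlinarith⟩
  refine ⟨(τ + s) / 2, (τ - s) / 2, by ring, by linear_combination - hs / 4,
    abs_le.2 ⟨by linarith, by linarith⟩, abs_le.2 ⟨by linarith, by linarith⟩⟩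

namespace Matrix

variable {R : Type*} [CommRing R]

theorem trace_pow_add_two_fin_two (A : Matrix (Fin 2) (Fin 2) R) (n : ℕ) :
    (A ^ (n + 2)).trace = A.trace * (A ^ (n + 1)).trace - A.det * (A ^ n).trace := by
  have cayley_hamilton : A ^ 2 = A.trace • A - A.det • 1 := by
    ext i j
    fin_cases i <;> fin_cases j <;> simp [sq, mul_apply, trace_fin_two, det_fin_two] <;> ring
  rw [pow_add, cayley_hamilton, mul_sub, Matrix.mul_smul, Matrix.mul_smul, mul_one, trace_sub,
    trace_smul, trace_smul, pow_succ, smul_eq_mul, smul_eq_mul]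

theorem algebraMap_trace_pow_fin_two {S : Type*} [CommRing S] [Algebra R S]
    (A : Matrix (Fin 2) (Fin 2) R) {a b : S} (hsum : a + b = algebraMap R S A.trace)
    (hprod : a * b = algebraMap R S A.det) :
    ∀ n : ℕ, algebraMap R S (A ^ n).trace = a ^ n + b ^ n
  | 0 => by simp [trace_one, one_add_one_eq_two, map_ofNat]
  | 1 => by simp [hsum]
  | n + 2 => by
    rw [trace_pow_add_two_fin_two, map_sub, map_mul, map_mul,
      algebraMap_trace_pow_fin_two A hsum hprod n,
      algebraMap_trace_pow_fin_two A hsum hprod (n + 1), ← hsum, ← hprod]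
    ring

theorem exists_charpoly_roots_abs_le_two (A : Matrix (Fin 2) (Fin 2) ℤ)
    (hA : ∀ i j, A i j = 0 ∨ A i j = 1) :
    ∃ a b : ℝ, a + b = A.trace ∧ a * b = A.det ∧ |a| ≤ 2 ∧ |b| ≤ 2 := by
  apply Real.exists_roots_abs_le <;> simp only [trace_fin_two, det_fin_two] <;>
    rcases hA 0 0 with h₀₀ | h₀₀ <;> rcases hA 0 1 with h₀₁ | h₀₁ <;>
    rcases hA 1 0 with h₁₀ | h₁₀ <;> rcases hA 1 1 with h₁₁ | h₁₁ <;>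
    norm_num [h₀₀, h₀₁, h₁₀, h₁₁]

end Matrix

theorem Real.hasSum_pow_add_pow_div {a b t : ℝ} (ha : |a * t| < 1) (hb : |b * t| < 1) :
    HasSum (fun n : ℕ => (a ^ (n + 1) + b ^ (n + 1)) * t ^ (n + 1) / (n + 1))
      (-Real.log ((1 - a * t) * (1 - b * t))) := by
  rw [Real.log_mul (sub_pos.2 (lt_of_abs_lt ha)).ne' (sub_pos.2 (lt_of_abs_lt hb)).ne', neg_add]
  convert (Real.hasSum_pow_div_log_of_abs_lt_one ha).add
    (Real.hasSum_pow_div_log_of_abs_lt_one hb) using 1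
  funext n
  ring

theorem zeta_of_two_dim_SFT (A : Matrix (Fin 2) (Fin 2) ℤ)
    (hA : ∀ i j, A i j = 0 ∨ A i j = 1) (t : ℝ) (ht : |t| < 1 / 2) :
    (∀ n : ℕ, 1 ≤ n → (perSet 2 A n).Finite) ∧
    Summable (fun n : ℕ => ((perSet 2 A (n + 1)).ncard : ℝ) * t ^ (n + 1) / (n + 1)) ∧
    Real.exp (∑' n : ℕ, ((perSet 2 A (n + 1)).ncard : ℝ) * t ^ (n + 1) / (n + 1)) =
      ((A.det : ℝ) * t ^ 2 - (A.trace : ℝ) * t + 1)⁻¹ := by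
  obtain ⟨a, b, hsum, hprod, ha, hb⟩ := Matrix.exists_charpoly_roots_abs_le_two A hA
  have hcard (n : ℕ) : ((perSet 2 A (n + 1)).ncard : ℝ) = a ^ (n + 1) + b ^ (n + 1) := by
    have := Matrix.algebraMap_trace_pow_fin_two A (S := ℝ) (by simpa using hsum)
      (by simpa using hprod) (n + 1)
    rw [Matrix.trace_pow_eq_ncard_closedWalks A hA] at this
    simpa [ncard_perSet] using this
  have hlt {c : ℝ} (hc : |c| ≤ 2) : |c * t| < 1 :=
    calc |c * t| = |c| * |t| := abs_mul c t
      _ ≤ 2 * |t| := by gcongr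
      _ < 1 := by linarith
  have hS := Real.hasSum_pow_add_pow_div (hlt ha) (hlt hb)
  have hpos : 0 < (1 - a * t) * (1 - b * t) :=
    mul_pos (sub_pos.2 (lt_of_abs_lt (hlt ha))) (sub_pos.2 (lt_of_abs_lt (hlt hb)))
  simp only [hcard]
  refine ⟨fun n hn => ?_, hS.summable, ?_⟩
  · have : NeZero n := NeZero.of_pos hn
    exact perSet_finite 2 A n
  · rw [hS.tsum_eq, Real.exp_neg, Real.exp_log hpos, ← hsum, ← hprod]
    ring
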